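/- Let Ω ⊂ ℝ³ be bounded and open, let M, K > 0, let φ : ℝ³ → [0,∞) be continuous, compactly supported and Lipschitz, and let β : ℝ³ → [0, M] and v : ℝ³ → [0, K] be measurable functions vanishing outside Ω. Define A(x) = ∫_Ω (β ∗ φ)(η) · v(η) · (4π |x−η|²)^{−1} · exp(−∫_0^{|x−η|} (β ∗ φ)(x + t·(η−x)/|η−x|) dt) dη. Then there exists a constant C > 0, depending only on Ω, M, K, sup φ and the Lipschitz constant of φ, such that |A(x) − A(x+h)| ≤ C |h|^{1/2} for all x ∈ Ω and all h ∈ ℝ³ with |h| ≤ 1 and x + h ∈ Ω. -/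

import Mathlib

open MeasureTheory Real

noncomputable section

abbrev E3 := EuclideanSpace ℝ (Fin 3)

/-- The convolution `(β ∗ φ)(y) = ∫ β(ξ) φ(y - ξ) dξ`. -/
def convOp (β φ : E3 → ℝ) (y : E3) : ℝ := ∫ ξ, β ξ * φ (y - ξ)

/-- `A(x) = ∫_Ω (β∗φ)(η) v(η) (4π|x-η|²)⁻¹ exp(-∫_0^{|x-η|} (β∗φ)(x + t (η-x)/|η-x|) dt) dη`. -/
def Aop (Ω : Set E3) (β φ v : E3 → ℝ) (x : E3) : ℝ :=
  ∫ η in Ω, convOp β φ η * v η * (4 * π * ‖x - η‖ ^ 2)⁻¹ *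
    Real.exp (-(∫ t in (0:ℝ)..‖x - η‖, convOp β φ (x + t • (‖η - x‖⁻¹ • (η - x)))))

open Metric Set

/-!
Write `w = β ∗ φ`: it is nonnegative, bounded and Lipschitz, so the attenuation exponent
`τ(x, η)`, the integral of `w` along the segment from `x` to `η`, is Lipschitz in `x`, and
`A(x) = ∫_Ω g(η) |x - η|⁻² e^{-τ(x, η)} dη` with `0 ≤ g ≤ G`. Put `r = √|h|`.
On `|x - η| < 2r` both kernels are bounded by `G |· - η|⁻²`, whose integral over a ball of
radius `ρ` in `ℝ³` is `3 |B₁| ρ`, so this part contributes `O(r)`. On `|x - η| ≥ 2r` the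
distances `|x - η|` and `|x + h - η|` are at least `r` and differ by at most `r²`, so the two
kernels differ by `O(r)` times their sum, whose integral over the bounded set `Ω` is bounded.
-/

section InverseSquare

lemma indicator_ball_inv_norm_sub_sq {E : Type*} [SeminormedAddCommGroup E] (c : E) (ρ : ℝ) :
    (ball c ρ).indicator (fun η => (‖c - η‖ ^ 2)⁻¹) =
      fun η => (ball 0 ρ).indicator (fun x => (‖x‖ ^ 2)⁻¹) (η - c) := by
  ext η
  simp only [indicator, mem_ball, dist_eq_norm, sub_zero, norm_sub_rev c]

variable {E : Type*} [NormedAddCommGroup E] [NormedSpace ℝ E] [FiniteDimensional ℝ E]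
  [MeasurableSpace E] [BorelSpace E] (μ : Measure E) [μ.IsAddHaarMeasure]

lemma integrableOn_inv_norm_sq_ball (hE : 3 ≤ Module.finrank ℝ E) (ρ : ℝ) :
    IntegrableOn (fun x : E => (‖x‖ ^ 2)⁻¹) (ball 0 ρ) μ := by
  have : Nontrivial E := Module.nontrivial_of_finrank_pos (R := ℝ) (by omega)
  rw [integrableOn_fun_norm_addHaar μ (f := fun y => (y ^ 2)⁻¹)]
  refine IntegrableOn.congr_fun (f := fun y : ℝ => y ^ (Module.finrank ℝ E - 3))
    ((continuous_pow _).integrableOn_Icc.mono_set Ioo_subset_Icc_self) (fun y hy => ?_)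
    measurableSet_Ioo
  have hy : y ≠ 0 := hy.1.ne'
  rw [smul_eq_mul, ← div_eq_mul_inv, eq_div_iff (by positivity), ← pow_add]
  congr 1
  omega

lemma integrableOn_inv_norm_sub_sq_ball (hE : 3 ≤ Module.finrank ℝ E) (c : E) (ρ : ℝ) :
    IntegrableOn (fun η : E => (‖c - η‖ ^ 2)⁻¹) (ball c ρ) μ := by
  rw [← integrable_indicator_iff measurableSet_ball, indicator_ball_inv_norm_sub_sq]
  exact ((integrable_indicator_iff measurableSet_ball).2
    (integrableOn_inv_norm_sq_ball μ hE ρ)).comp_sub_right c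

lemma setIntegral_Ioi_pow_smul_indicator_inv_sq {n : ℕ} (hn : 3 ≤ n) {ρ : ℝ} (hρ : 0 ≤ ρ) :
    ∫ y in Ioi (0 : ℝ), y ^ (n - 1) • (Iio ρ).indicator (fun y => (y ^ 2)⁻¹) y
      = ρ ^ (n - 2) / (n - 2 : ℕ) := by
  have hpow : ∀ y ∈ Ioi (0 : ℝ), y ^ (n - 1) • (Iio ρ).indicator (fun y => (y ^ 2)⁻¹) y
      = (Iio ρ).indicator (fun y => y ^ (n - 3)) y := by
    intro y (hy : 0 < y)
    by_cases hyρ : y ∈ Iio ρ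
    · rw [indicator_of_mem hyρ, indicator_of_mem hyρ, smul_eq_mul, ← div_eq_mul_inv,
        div_eq_iff (by positivity), ← pow_add]
      congr 1
      omega
    · simp [hyρ]
  rw [setIntegral_congr_fun measurableSet_Ioi hpow, setIntegral_indicator measurableSet_Iio,
    Ioi_inter_Iio, ← integral_Ioc_eq_integral_Ioo, ← intervalIntegral.integral_of_le hρ,
    integral_pow, zero_pow (by omega), sub_zero]
  norm_cast
  rw [show n - 3 + 1 = n - 2 by omega]

lemma setIntegral_inv_norm_sub_sq_ball (hE : 3 ≤ Module.finrank ℝ E) (c : E) {ρ : ℝ}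
    (hρ : 0 ≤ ρ) :
    ∫ η in ball c ρ, (‖c - η‖ ^ 2)⁻¹ ∂μ = Module.finrank ℝ E / (Module.finrank ℝ E - 2 : ℕ)
      * μ.real (ball 0 1) * ρ ^ (Module.finrank ℝ E - 2) := by
  have : Nontrivial E := Module.nontrivial_of_finrank_pos (R := ℝ) (by omega)
  have hradial : ∀ x : E, (ball (0 : E) ρ).indicator (fun x => (‖x‖ ^ 2)⁻¹) x =
      (Iio ρ).indicator (fun y : ℝ => (y ^ 2)⁻¹) ‖x‖ := by
    intro x; simp [indicator, mem_ball]
  rw [← integral_indicator measurableSet_ball, indicator_ball_inv_norm_sub_sq,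
    integral_sub_right_eq_self (fun x => (ball (0 : E) ρ).indicator (fun x => (‖x‖ ^ 2)⁻¹) x) c]
  simp_rw [hradial]
  rw [integral_fun_norm_addHaar μ, setIntegral_Ioi_pow_smul_indicator_inv_sq hE hρ, nsmul_eq_mul,
    smul_eq_mul]
  ring

end InverseSquare

section Convolution

variable {Ω : Set E3} {β φ : E3 → ℝ} {M Cφ : ℝ} {Lip : NNReal}

lemma convOp_eq_setIntegral (hβ0 : ∀ y, y ∉ Ω → β y = 0) (y : E3) :
    convOp β φ y = ∫ ξ in Ω, β ξ * φ (y - ξ) :=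
  (setIntegral_eq_integral_of_forall_compl_eq_zero fun ξ hξ => by simp [hβ0 ξ hξ]).symm

lemma norm_mul_le_of_bounds (hβ : ∀ y, 0 ≤ β y ∧ β y ≤ M) (hφ : ∀ y, 0 ≤ φ y ∧ φ y ≤ Cφ)
    (ξ y : E3) : ‖β ξ * φ y‖ ≤ M * Cφ := by
  rw [norm_mul, Real.norm_of_nonneg (hβ ξ).1, Real.norm_of_nonneg (hφ y).1]
  exact mul_le_mul (hβ ξ).2 (hφ y).2 (hφ y).1 ((hβ ξ).1.trans (hβ ξ).2)

lemma convOp_nonneg (hβ : ∀ y, 0 ≤ β y ∧ β y ≤ M) (hφ : ∀ y, 0 ≤ φ y ∧ φ y ≤ Cφ) (y : E3) :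
    0 ≤ convOp β φ y :=
  integral_nonneg fun ξ => mul_nonneg (hβ ξ).1 (hφ _).1

lemma convOp_le (hΩ : volume Ω < ⊤) (hβ : ∀ y, 0 ≤ β y ∧ β y ≤ M)
    (hβ0 : ∀ y, y ∉ Ω → β y = 0) (hφ : ∀ y, 0 ≤ φ y ∧ φ y ≤ Cφ) (y : E3) :
    convOp β φ y ≤ M * Cφ * volume.real Ω := by
  rw [convOp_eq_setIntegral hβ0]
  exact (Real.le_norm_self _).trans
    (norm_setIntegral_le_of_norm_le_const hΩ fun ξ _ => norm_mul_le_of_bounds hβ hφ ξ _)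

lemma lipschitzWith_convOp (hΩ : volume Ω < ⊤) (hβm : Measurable β)
    (hβ : ∀ y, 0 ≤ β y ∧ β y ≤ M) (hβ0 : ∀ y, y ∉ Ω → β y = 0)
    (hφ : ∀ y, 0 ≤ φ y ∧ φ y ≤ Cφ) (hφl : LipschitzWith Lip φ) :
    LipschitzWith (Real.toNNReal (M * Lip * volume.real Ω)) (convOp β φ) := by
  have hint : ∀ y, IntegrableOn (fun ξ => β ξ * φ (y - ξ)) Ω :=
    fun y => Measure.integrableOn_of_bounded (M := M * Cφ) hΩ.ne
      (hβm.mul (hφl.continuous.measurable.comp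
        (measurable_const.sub measurable_id))).aestronglyMeasurable
      (ae_of_all _ fun ξ => norm_mul_le_of_bounds hβ hφ ξ _)
  refine LipschitzWith.of_dist_le' fun y y' => ?_
  rw [dist_eq_norm, convOp_eq_setIntegral hβ0, convOp_eq_setIntegral hβ0,
    ← integral_sub (hint y) (hint y'), mul_right_comm (M * Lip)]
  apply norm_setIntegral_le_of_norm_le_const hΩ
  intro ξ _
  rw [← mul_sub, norm_mul, Real.norm_of_nonneg (hβ ξ).1, mul_assoc]
  refine mul_le_mul (hβ ξ).2 ?_ (norm_nonneg _) ((hβ ξ).1.trans (hβ ξ).2)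
  simpa [dist_eq_norm] using hφl.dist_le_mul (y - ξ) (y' - ξ)

end Convolution

section Segment

variable {E : Type*} [NormedAddCommGroup E] [NormedSpace ℝ E] {w : E → ℝ} {K : NNReal} {W : ℝ}

def segmentIntegral (w : E → ℝ) (x η : E) : ℝ :=
  ‖η - x‖ * ∫ s in (0 : ℝ)..1, w (x + s • (η - x))

lemma intervalIntegral_unit_direction_eq_segmentIntegral (w : E → ℝ) (x η : E) :
    ∫ t in (0 : ℝ)..‖x - η‖, w (x + t • (‖η - x‖⁻¹ • (η - x))) = segmentIntegral w x η := by
  rcases eq_or_ne η x with rfl | hη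
  · simp [segmentIntegral]
  have hL : ‖η - x‖ ≠ 0 := norm_ne_zero_iff.2 (sub_ne_zero.2 hη)
  have hsub := intervalIntegral.smul_integral_comp_mul_left (a := 0) (b := 1)
    (fun t => w (x + t • (‖η - x‖⁻¹ • (η - x)))) ‖η - x‖
  rw [mul_zero, mul_one] at hsub
  rw [norm_sub_rev x η, ← hsub, segmentIntegral, smul_eq_mul]
  simp only [smul_smul, mul_comm ‖η - x‖, mul_assoc, inv_mul_cancel₀ hL, mul_one]

lemma segmentIntegral_nonneg (hw : ∀ y, 0 ≤ w y) (x η : E) : 0 ≤ segmentIntegral w x η :=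
  mul_nonneg (norm_nonneg _) (intervalIntegral.integral_nonneg zero_le_one fun _ _ => hw _)

lemma abs_integral_segment_sub_le (hw : LipschitzWith K w) (x x' η : E) :
    |(∫ s in (0 : ℝ)..1, w (x + s • (η - x))) - ∫ s in (0 : ℝ)..1, w (x' + s • (η - x'))|
      ≤ K * ‖x - x'‖ := by
  rw [← intervalIntegral.integral_sub, ← Real.norm_eq_abs]
  · refine (intervalIntegral.norm_integral_le_of_norm_le_const (C := K * ‖x - x'‖)
      fun s hs => ?_).trans_eq (by simp)
    rw [uIoc_of_le zero_le_one] at hs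
    have hpt : (x + s • (η - x)) - (x' + s • (η - x')) = (1 - s) • (x - x') := by
      simp only [smul_sub, sub_smul, one_smul]; abel
    calc ‖w (x + s • (η - x)) - w (x' + s • (η - x'))‖
        ≤ K * ‖(1 - s) • (x - x')‖ := by
          simpa [dist_eq_norm, hpt] using hw.dist_le_mul (x + s • (η - x)) (x' + s • (η - x'))
      _ ≤ K * ‖x - x'‖ := by
          rw [norm_smul, Real.norm_of_nonneg (by linarith [hs.2])]
          gcongr
          nlinarith [hs.1, norm_nonneg (x - x')]
  all_goals exact (hw.continuous.comp (by fun_prop)).intervalIntegrable _ _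

lemma abs_segmentIntegral_sub_le (hw : LipschitzWith K w) (hw0 : ∀ y, 0 ≤ w y)
    (hwW : ∀ y, w y ≤ W) (x x' η : E) :
    |segmentIntegral w x η - segmentIntegral w x' η| ≤ (K * ‖η - x‖ + W) * ‖x - x'‖ := by
  set I := fun z : E => ∫ s in (0 : ℝ)..1, w (z + s • (η - z))
  have hI : |I x'| ≤ W := by
    rw [abs_of_nonneg (intervalIntegral.integral_nonneg zero_le_one fun _ _ => hw0 _)]
    simpa using intervalIntegral.integral_mono_on zero_le_one
      ((hw.continuous.comp (by fun_prop)).intervalIntegrable _ _)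
      (intervalIntegrable_const (μ := volume))
      (fun s _ => hwW (x' + s • (η - x')))
  have hnorm : |‖η - x‖ - ‖η - x'‖| ≤ ‖x - x'‖ := by
    simpa [norm_sub_rev x'] using abs_norm_sub_norm_le (η - x) (η - x')
  calc |segmentIntegral w x η - segmentIntegral w x' η|
      = |‖η - x‖ * (I x - I x') + (‖η - x‖ - ‖η - x'‖) * I x'| := by
        simp only [segmentIntegral, I]; ring_nf
    _ ≤ ‖η - x‖ * (K * ‖x - x'‖) + ‖x - x'‖ * W := by
        refine (abs_add_le _ _).trans (add_le_add ?_ ?_) <;> rw [abs_mul]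
        · rw [abs_of_nonneg (norm_nonneg _)]
          exact mul_le_mul_of_nonneg_left (abs_integral_segment_sub_le hw x x' η) (norm_nonneg _)
        · exact mul_le_mul hnorm hI (abs_nonneg _) (norm_nonneg _)
    _ = (K * ‖η - x‖ + W) * ‖x - x'‖ := by ring

lemma continuous_segmentIntegral (hw : Continuous w) (x : E) :
    Continuous (segmentIntegral w x) := by
  unfold segmentIntegral
  fun_prop

end Segment

lemma abs_exp_neg_sub_exp_neg_le {s t : ℝ} (hs : 0 ≤ s) (ht : 0 ≤ t) :
    |exp (-s) - exp (-t)| ≤ |s - t| := by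
  wlog hts : t ≤ s generalizing s t
  · rw [abs_sub_comm, abs_sub_comm s]
    exact this ht hs (le_of_not_ge hts)
  have hst : exp (-s) ≤ exp (-t) := exp_le_exp.2 (neg_le_neg hts)
  rw [abs_sub_comm, abs_of_nonneg (sub_nonneg.2 hst), abs_of_nonneg (sub_nonneg.2 hts)]
  calc exp (-t) - exp (-s) = exp (-t) * (1 - exp (-(s - t))) := by
        rw [mul_sub, mul_one, ← exp_add]; ring_nf
    _ ≤ 1 * (s - t) :=
        mul_le_mul (exp_le_one_iff.2 (neg_nonpos.2 ht)) (by linarith [add_one_le_exp (-(s - t))])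
          (sub_nonneg.2 (exp_le_one_iff.2 (by linarith))) zero_le_one
    _ = s - t := one_mul _

lemma abs_inv_sq_sub_inv_sq_le {a b r d : ℝ} (hr : 0 < r) (ha : r ≤ a) (hb : r ≤ b)
    (hab : |a - b| ≤ d) : |(a ^ 2)⁻¹ - (b ^ 2)⁻¹| ≤ d / r * ((a ^ 2)⁻¹ + (b ^ 2)⁻¹) := by
  have ha0 : 0 < a := hr.trans_le ha
  have hb0 : 0 < b := hr.trans_le hb
  have hsplit : (a ^ 2)⁻¹ - (b ^ 2)⁻¹ = (b - a) * (a⁻¹ * (b ^ 2)⁻¹ + b⁻¹ * (a ^ 2)⁻¹) := by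
    field_simp; ring
  rw [hsplit, abs_mul, abs_of_nonneg (a := a⁻¹ * (b ^ 2)⁻¹ + b⁻¹ * (a ^ 2)⁻¹) (by positivity),
    abs_sub_comm]
  calc |a - b| * (a⁻¹ * (b ^ 2)⁻¹ + b⁻¹ * (a ^ 2)⁻¹)
      ≤ d * (r⁻¹ * (b ^ 2)⁻¹ + r⁻¹ * (a ^ 2)⁻¹) := by
        have := (abs_nonneg _).trans hab
        gcongr
    _ = d / r * ((a ^ 2)⁻¹ + (b ^ 2)⁻¹) := by ring

lemma abs_attenuated_sub_le {g G a b τ τ' r L : ℝ} (hg : 0 ≤ g) (hgG : g ≤ G)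
    (hτ : 0 ≤ τ) (hτ' : 0 ≤ τ') (hττ' : |τ - τ'| ≤ L * r)
    (hr : 0 < r) (ha : r ≤ a) (hb : r ≤ b) (hab : |a - b| ≤ r ^ 2) :
    |g * (a ^ 2)⁻¹ * exp (-τ) - g * (b ^ 2)⁻¹ * exp (-τ')|
      ≤ G * (1 + L) * r * ((a ^ 2)⁻¹ + (b ^ 2)⁻¹) := by
  have hinv := abs_inv_sq_sub_inv_sq_le hr ha hb hab
  rw [pow_two r, mul_div_cancel_right₀ _ hr.ne'] at hinv
  have hexp := (abs_exp_neg_sub_exp_neg_le hτ hτ').trans hττ'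
  have he : exp (-τ) ≤ 1 := exp_le_one_iff.2 (neg_nonpos.2 hτ)
  calc |g * (a ^ 2)⁻¹ * exp (-τ) - g * (b ^ 2)⁻¹ * exp (-τ')|
      = g * |((a ^ 2)⁻¹ - (b ^ 2)⁻¹) * exp (-τ) + (b ^ 2)⁻¹ * (exp (-τ) - exp (-τ'))| := by
        rw [← abs_of_nonneg hg, ← abs_mul, abs_of_nonneg hg]; ring_nf
    _ ≤ G * (r * ((a ^ 2)⁻¹ + (b ^ 2)⁻¹) * 1 + (b ^ 2)⁻¹ * (L * r)) := by
        refine mul_le_mul hgG ((abs_add_le _ _).trans (add_le_add ?_ ?_)) (abs_nonneg _)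
          (hg.trans hgG) <;> rw [abs_mul]
        · exact mul_le_mul hinv (by rw [abs_of_pos (exp_pos _)]; exact he) (abs_nonneg _)
            (by positivity)
        · rw [abs_of_nonneg (by positivity)]; gcongr
    _ ≤ G * (1 + L) * r * ((a ^ 2)⁻¹ + (b ^ 2)⁻¹) := by
        have hL : 0 ≤ L := nonneg_of_mul_nonneg_left ((abs_nonneg _).trans hττ') hr
        have : 0 ≤ G := hg.trans hgG
        have : 0 ≤ (a ^ 2)⁻¹ := by positivity
        nlinarith [mul_nonneg (mul_nonneg this hL) hr.le]

section Kernel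

variable {s Ω : Set E3} {c x x' : E3} {ρ D r G L : ℝ} {F : E3 → E3 → ℝ}

lemma integrableOn_inv_norm_sub_sq (hs : s ⊆ ball c ρ) :
    IntegrableOn (fun η => (‖c - η‖ ^ 2)⁻¹) s :=
  (integrableOn_inv_norm_sub_sq_ball volume (by simp) c ρ).mono_set hs

lemma setIntegral_inv_norm_sub_sq_le (hs : s ⊆ ball c ρ) (hρ : 0 ≤ ρ) :
    ∫ η in s, (‖c - η‖ ^ 2)⁻¹ ≤ 3 * volume.real (ball (0 : E3) 1) * ρ := by
  calc ∫ η in s, (‖c - η‖ ^ 2)⁻¹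
      ≤ ∫ η in ball c ρ, (‖c - η‖ ^ 2)⁻¹ :=
        setIntegral_mono_set (integrableOn_inv_norm_sub_sq subset_rfl)
          (ae_of_all _ fun _ => by positivity) hs.eventuallyLE
    _ = 3 * volume.real (ball (0 : E3) 1) * ρ := by
        rw [setIntegral_inv_norm_sub_sq_ball volume (by simp) c hρ]
        simp

lemma setIntegral_le_of_le_inv_norm_sub_sq_add {t : Set E3} {f : E3 → ℝ} {ρ' C : ℝ}
    (ht : MeasurableSet t) (hf : IntegrableOn f t) (htx : t ⊆ ball x ρ) (htx' : t ⊆ ball x' ρ')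
    (hρ : 0 ≤ ρ) (hρ' : 0 ≤ ρ') (hC : 0 ≤ C)
    (hfC : ∀ η ∈ t, f η ≤ C * ((‖x - η‖ ^ 2)⁻¹ + (‖x' - η‖ ^ 2)⁻¹)) :
    ∫ η in t, f η ≤ C * (3 * volume.real (ball (0 : E3) 1) * (ρ + ρ')) := by
  have hx := integrableOn_inv_norm_sub_sq htx
  have hx' := integrableOn_inv_norm_sub_sq htx'
  calc ∫ η in t, f η ≤ ∫ η in t, C * ((‖x - η‖ ^ 2)⁻¹ + (‖x' - η‖ ^ 2)⁻¹) :=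
        setIntegral_mono_on hf ((hx.add hx').const_mul C) ht hfC
    _ = C * ((∫ η in t, (‖x - η‖ ^ 2)⁻¹) + ∫ η in t, (‖x' - η‖ ^ 2)⁻¹) := by
        rw [integral_const_mul, integral_add hx hx']
    _ ≤ C * (3 * volume.real (ball (0 : E3) 1) * (ρ + ρ')) := by
        rw [mul_add (3 * _)]
        gcongr
        exacts [setIntegral_inv_norm_sub_sq_le htx hρ, setIntegral_inv_norm_sub_sq_le htx' hρ']

/-- `15 = 3 (2 + 3)`: on `Ω ∩ ball x (2r) ⊆ ball x' (3r)` both kernels are bounded separately;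
`6 = 3 (1 + 1)`: on the rest of `Ω` the far-field estimate is integrated over `ball x D` and
`ball x' D`. -/
theorem abs_setIntegral_sub_le_of_inv_norm_sq_kernel (hΩ : MeasurableSet Ω)
    (hΩx : Ω ⊆ ball x D) (hΩx' : Ω ⊆ ball x' D) (hD : 0 ≤ D) (hG : 0 ≤ G) (hL : 0 ≤ L)
    (hxx' : ‖x - x'‖ ≤ r) (hFx : IntegrableOn (F x) Ω) (hFx' : IntegrableOn (F x') Ω)
    (hbound : ∀ z η, |F z η| ≤ G * (‖z - η‖ ^ 2)⁻¹)
    (hfar : ∀ η ∈ Ω, 2 * r ≤ ‖x - η‖ →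
      |F x η - F x' η| ≤ L * r * ((‖x - η‖ ^ 2)⁻¹ + (‖x' - η‖ ^ 2)⁻¹)) :
    |(∫ η in Ω, F x η) - ∫ η in Ω, F x' η|
      ≤ (15 * G + 6 * L * D) * volume.real (ball (0 : E3) 1) * r := by
  have hr : 0 ≤ r := (norm_nonneg _).trans hxx'
  have hsub : IntegrableOn (fun η => |F x η - F x' η|) Ω := (hFx.sub hFx').abs
  have hnear : Ω ∩ ball x (2 * r) ⊆ ball x' (3 * r) := fun η ⟨_, hη⟩ => by
    rw [mem_ball] at hη ⊢
    calc dist η x' ≤ dist η x + dist x x' := dist_triangle _ _ _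
      _ < 2 * r + r := add_lt_add_of_lt_of_le hη (by rwa [dist_eq_norm])
      _ = 3 * r := by ring
  have hnear_le := setIntegral_le_of_le_inv_norm_sub_sq_add (hΩ.inter measurableSet_ball)
    (hsub.mono_set inter_subset_left) inter_subset_right hnear (by positivity) (by positivity) hG
    fun η _ => (abs_sub _ _).trans (by rw [mul_add]; exact add_le_add (hbound x η) (hbound x' η))
  have hfar_le := setIntegral_le_of_le_inv_norm_sub_sq_add (hΩ.diff measurableSet_ball)
    (hsub.mono_set sdiff_subset) (sdiff_subset.trans hΩx) (sdiff_subset.trans hΩx') hD hD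
    (mul_nonneg hL hr) fun η hη =>
      hfar η hη.1 (by simpa only [mem_ball, not_lt, dist_comm η, dist_eq_norm] using hη.2)
  calc |(∫ η in Ω, F x η) - ∫ η in Ω, F x' η| ≤ ∫ η in Ω, |F x η - F x' η| := by
        rw [← integral_sub hFx hFx']
        exact abs_integral_le_integral_abs
    _ = (∫ η in Ω ∩ ball x (2 * r), |F x η - F x' η|)
          + ∫ η in Ω \ ball x (2 * r), |F x η - F x' η| :=
        (integral_inter_add_sdiff measurableSet_ball hsub).symm
    _ ≤ _ := (add_le_add hnear_le hfar_le).trans_eq (by ring)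

end Kernel

section Attenuated

variable {Ω : Set E3} {w g : E3 → ℝ} {Kw : NNReal} {W G D r : ℝ} {x x' z η : E3}

def attenuatedKernel (g w : E3 → ℝ) (z η : E3) : ℝ :=
  g η * (‖z - η‖ ^ 2)⁻¹ * exp (-segmentIntegral w z η)

lemma abs_attenuatedKernel_le (hw0 : ∀ y, 0 ≤ w y) (hg0 : ∀ y, 0 ≤ g y) (hgG : ∀ y, g y ≤ G)
    (z η : E3) : |attenuatedKernel g w z η| ≤ G * (‖z - η‖ ^ 2)⁻¹ := by
  have he : exp (-segmentIntegral w z η) ≤ 1 :=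
    exp_le_one_iff.2 (neg_nonpos.2 (segmentIntegral_nonneg hw0 z η))
  have hk : 0 ≤ (‖z - η‖ ^ 2)⁻¹ := by positivity
  rw [attenuatedKernel, abs_of_nonneg (mul_nonneg (mul_nonneg (hg0 η) hk) (exp_pos _).le)]
  calc g η * (‖z - η‖ ^ 2)⁻¹ * exp (-segmentIntegral w z η) ≤ G * (‖z - η‖ ^ 2)⁻¹ * 1 :=
        mul_le_mul (mul_le_mul_of_nonneg_right (hgG η) hk) he (exp_pos _).le
          (mul_nonneg ((hg0 η).trans (hgG η)) hk)
    _ = G * (‖z - η‖ ^ 2)⁻¹ := mul_one _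

lemma integrableOn_attenuatedKernel (hΩz : Ω ⊆ ball z D) (hw : Continuous w)
    (hw0 : ∀ y, 0 ≤ w y) (hg : Measurable g) (hg0 : ∀ y, 0 ≤ g y) (hgG : ∀ y, g y ≤ G) :
    IntegrableOn (attenuatedKernel g w z) Ω :=
  Integrable.mono' ((integrableOn_inv_norm_sub_sq hΩz).const_mul G)
    ((hg.mul (by fun_prop : Measurable fun η : E3 => (‖z - η‖ ^ 2)⁻¹)).mul
      (continuous_segmentIntegral hw z).neg.rexp.measurable).aestronglyMeasurable
    (ae_of_all _ (abs_attenuatedKernel_le hw0 hg0 hgG z))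

lemma abs_attenuatedKernel_sub_le (hw : LipschitzWith Kw w) (hw0 : ∀ y, 0 ≤ w y)
    (hwW : ∀ y, w y ≤ W) (hg0 : ∀ y, 0 ≤ g y) (hgG : ∀ y, g y ≤ G) (hηx : ‖η - x‖ ≤ D)
    (hr : 0 < r) (hr1 : r ≤ 1) (hxx' : ‖x - x'‖ = r ^ 2) (hfar : 2 * r ≤ ‖x - η‖) :
    |attenuatedKernel g w x η - attenuatedKernel g w x' η|
      ≤ G * (1 + (Kw * D + W)) * r * ((‖x - η‖ ^ 2)⁻¹ + (‖x' - η‖ ^ 2)⁻¹) := by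
  have hrr : r ^ 2 ≤ r := by nlinarith
  have hab : |‖x - η‖ - ‖x' - η‖| ≤ r ^ 2 := by
    simpa [hxx'] using abs_norm_sub_norm_le (x - η) (x' - η)
  have hτ : |segmentIntegral w x η - segmentIntegral w x' η| ≤ (Kw * D + W) * r := by
    refine (abs_segmentIntegral_sub_le hw hw0 hwW x x' η).trans
      (mul_le_mul ?_ (hxx'.trans_le hrr) (norm_nonneg _) ?_)
    · gcongr
    · exact add_nonneg (mul_nonneg Kw.coe_nonneg ((norm_nonneg _).trans hηx))
        ((hw0 0).trans (hwW 0))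
  exact abs_attenuated_sub_le (hg0 η) (hgG η) (segmentIntegral_nonneg hw0 x η)
    (segmentIntegral_nonneg hw0 x' η) hτ hr (by linarith)
    (by linarith [(abs_le.1 hab).2]) hab

theorem abs_setIntegral_attenuatedKernel_sub_le (hΩ : MeasurableSet Ω)
    (hΩx : Ω ⊆ ball x D) (hΩx' : Ω ⊆ ball x' D) (hD : 0 ≤ D) (hw : LipschitzWith Kw w)
    (hw0 : ∀ y, 0 ≤ w y) (hwW : ∀ y, w y ≤ W)
    (hg : Measurable g) (hg0 : ∀ y, 0 ≤ g y) (hgG : ∀ y, g y ≤ G) (hxx' : ‖x - x'‖ ≤ 1) :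
    |(∫ η in Ω, attenuatedKernel g w x η) - ∫ η in Ω, attenuatedKernel g w x' η|
      ≤ (15 * G + 6 * (G * (1 + (Kw * D + W))) * D) * volume.real (ball (0 : E3) 1)
        * √‖x - x'‖ := by
  rcases eq_or_ne x x' with rfl | hne
  · simp
  have hG : 0 ≤ G := (hg0 0).trans (hgG 0)
  have hr : 0 < √‖x - x'‖ := sqrt_pos.2 (norm_pos_iff.2 (sub_ne_zero.2 hne))
  have hr2 : √‖x - x'‖ ^ 2 = ‖x - x'‖ := sq_sqrt (norm_nonneg _)
  have hr1 : √‖x - x'‖ ≤ 1 := sqrt_le_one.2 hxx'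
  refine abs_setIntegral_sub_le_of_inv_norm_sq_kernel hΩ hΩx hΩx' hD hG
    (mul_nonneg hG (add_nonneg zero_le_one (add_nonneg (by positivity) ((hw0 0).trans (hwW 0)))))
    (by nlinarith) (integrableOn_attenuatedKernel hΩx hw.continuous hw0 hg hg0 hgG)
    (integrableOn_attenuatedKernel hΩx' hw.continuous hw0 hg hg0 hgG)
    (abs_attenuatedKernel_le hw0 hg0 hgG) fun η hη hfar =>
      abs_attenuatedKernel_sub_le hw hw0 hwW hg0 hgG (mem_ball_iff_norm.1 (hΩx hη)).le hr hr1
        hr2.symm hfar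

end Attenuated

lemma Aop_eq_setIntegral_attenuatedKernel (Ω : Set E3) (β φ v : E3 → ℝ) (z : E3) :
    Aop Ω β φ v z = ∫ η in Ω,
      attenuatedKernel (fun η => convOp β φ η * v η * (4 * π)⁻¹) (convOp β φ) z η := by
  refine integral_congr_ae (ae_of_all _ fun η => ?_)
  dsimp only [attenuatedKernel]
  rw [intervalIntegral_unit_direction_eq_segmentIntegral, mul_inv]
  ring

theorem stmt16 (Ω : Set E3) (hΩo : IsOpen Ω) (hΩb : Bornology.IsBounded Ω)
    (M K Cφ : ℝ) (hM : 0 < M) (hK : 0 < K) (hCφ : 0 < Cφ) (Lip : NNReal) :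
    ∃ C : ℝ, 0 < C ∧
      ∀ φ : E3 → ℝ, Continuous φ → HasCompactSupport φ →
        (∀ y, 0 ≤ φ y ∧ φ y ≤ Cφ) → LipschitzWith Lip φ →
      ∀ β v : E3 → ℝ, Measurable β → Measurable v →
        (∀ y, 0 ≤ β y ∧ β y ≤ M) → (∀ y, y ∉ Ω → β y = 0) →
        (∀ y, 0 ≤ v y ∧ v y ≤ K) → (∀ y, y ∉ Ω → v y = 0) →
      ∀ x : E3, x ∈ Ω → ∀ h : E3, ‖h‖ ≤ 1 → x + h ∈ Ω →
        |Aop Ω β φ v x - Aop Ω β φ v (x + h)| ≤ C * Real.sqrt ‖h‖ := by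
  obtain ⟨R, hR, hΩR⟩ := hΩb.subset_ball_lt 0 0
  have hΩfin : volume Ω < ⊤ := (measure_mono hΩR).trans_lt measure_ball_lt_top
  have hΩD : ∀ z ∈ Ω, Ω ⊆ ball z (2 * R) := fun z hz =>
    hΩR.trans (ball_subset_ball' (by linarith [mem_ball'.1 (hΩR hz)]))
  set W := M * Cφ * volume.real Ω
  set Kw := Real.toNNReal (M * Lip * volume.real Ω)
  set G := W * K * (4 * π)⁻¹
  have hW : 0 ≤ W := by positivity
  refine ⟨(15 * G + 6 * (G * (1 + (Kw * (2 * R) + W))) * (2 * R))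
    * volume.real (ball (0 : E3) 1) + 1, by positivity, ?_⟩
  intro φ _ _ hφ hφl β v hβm hvm hβ hβ0 hv _ x hx h hh hxh
  have hw := lipschitzWith_convOp hΩfin hβm hβ hβ0 hφ hφl
  have hwW := convOp_le hΩfin hβ hβ0 hφ
  have hw0 := convOp_nonneg hβ hφ
  rw [Aop_eq_setIntegral_attenuatedKernel, Aop_eq_setIntegral_attenuatedKernel]
  refine (abs_setIntegral_attenuatedKernel_sub_le hΩo.measurableSet (hΩD x hx) (hΩD _ hxh)
    (by positivity) hw hw0 hwW ((hw.continuous.measurable.mul hvm).mul_const _)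
    (fun η => mul_nonneg (mul_nonneg (hw0 η) (hv η).1) (by positivity))
    (fun η => mul_le_mul_of_nonneg_right (mul_le_mul (hwW η) (hv η).2 (hv η).1 hW)
      (by positivity))
    (by simpa using hh)).trans ?_
  rw [show x - (x + h) = -h by abel, norm_neg]
  gcongr
  linarith
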